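/- Corollary 4.4, low distribution shift part. Let (Ω, ℙ) be a probability space and let x, y : Ω → ℝᵈ be measurable maps such that the matrix-valued functions ω ↦ x(ω)x(ω)ᵀ, ω ↦ x(ω)y(ω)ᵀ and ω ↦ y(ω)y(ω)ᵀ are Bochner integrable. Define Σ_cov := 𝔼[x xᵀ], Σ_cr := 𝔼[x yᵀ] and Σ_next := 𝔼[y yᵀ], and assume Σ_cov is positive definite. Let C ≥ 0 satisfy Σ_next ⪯ C·Σ_cov and let γ ∈ (0,1) satisfy γ·√C < 1. Then the matrix I − γ·Σ_cov^{−1/2}·Σ_cr·Σ_cov^{−1/2} is invertible and ‖(I − γ·Σ_cov^{−1/2}·Σ_cr·Σ_cov^{−1/2})⁻¹‖ ≤ 1/(1 − γ·√C). -/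

import Mathlib

/-
Whitening by `W = Σ_cov^{-1/2}` turns `uᵀ (W Σ_cr W) v` into `𝔼[(Wu ⬝ x)(Wv ⬝ y)]`. By the
Cauchy–Schwarz inequality its square is at most `(Wu)ᵀ Σ_cov (Wu) · (Wv)ᵀ Σ_next (Wv)`, and
`Σ_next ⪯ C Σ_cov` together with `W Σ_cov W = I` bounds this by `C ‖u‖² ‖v‖²`. Hence
`‖γ W Σ_cr W‖ ≤ γ √C < 1`, and the Neumann series `∑ (γ W Σ_cr W)ᵏ` inverts
`I - γ W Σ_cr W` with norm at most `1 / (1 - γ √C)`.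
-/

open scoped Matrix.Norms.L2Operator
open Matrix MeasureTheory

/-- The square root of a positive semidefinite matrix, as defined in the older Mathlib
(removed since). -/
noncomputable def Matrix.PosSemidef.sqrt {n 𝕜 : Type*} [Fintype n] [DecidableEq n] [RCLike 𝕜]
    [PartialOrder 𝕜] [StarOrderedRing 𝕜] {A : Matrix n n 𝕜} (hA : A.PosSemidef) : Matrix n n 𝕜 :=
  (hA.1.eigenvectorUnitary : Matrix n n 𝕜) *
    diagonal (((↑) : ℝ → 𝕜) ∘ (√·) ∘ hA.1.eigenvalues) *
    (star hA.1.eigenvectorUnitary : Matrix n n 𝕜)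

namespace Matrix

section Sqrt

open scoped ComplexOrder

variable {n 𝕜 : Type*} [Fintype n] [DecidableEq n] [RCLike 𝕜] {A : Matrix n n 𝕜}

theorem PosSemidef.sqrt_eq_cfc (hA : A.PosSemidef) : hA.sqrt = cfc Real.sqrt A := by
  rw [hA.1.cfc_eq, IsHermitian.cfc, Unitary.conjStarAlgAut_apply]
  rfl

theorem PosSemidef.sqrt_mul_self (hA : A.PosSemidef) : hA.sqrt * hA.sqrt = A := by
  rw [sqrt_eq_cfc, ← cfc_mul Real.sqrt Real.sqrt A]
  conv_rhs => rw [← cfc_id' ℝ A hA.1]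
  refine cfc_congr fun x hx => Real.mul_self_sqrt ?_
  rw [hA.1.spectrum_real_eq_range_eigenvalues] at hx
  obtain ⟨i, rfl⟩ := hx
  exact hA.eigenvalues_nonneg i

theorem PosSemidef.isHermitian_sqrt (hA : A.PosSemidef) : hA.sqrt.IsHermitian := by
  rw [sqrt_eq_cfc]
  exact cfc_predicate _ _

theorem PosDef.inv_sqrt_mul_self_mul_inv_sqrt (hA : A.PosDef) :
    hA.posSemidef.sqrt⁻¹ * A * hA.posSemidef.sqrt⁻¹ = 1 := by
  set S := hA.posSemidef.sqrt
  have hSS : S * S = A := hA.posSemidef.sqrt_mul_self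
  have hS : IsUnit S.det := by
    have h := (isUnit_iff_isUnit_det A).mp hA.isUnit
    rw [← hSS, det_mul, IsUnit.mul_iff] at h
    exact h.1
  calc S⁻¹ * A * S⁻¹ = (S⁻¹ * S) * (S * S⁻¹) := by rw [← hSS]; simp only [Matrix.mul_assoc]
    _ = 1 := by rw [nonsing_inv_mul _ hS, mul_nonsing_inv _ hS, one_mul]

end Sqrt

variable {n : Type*} [Fintype n]

theorem dotProduct_mul_mul_mulVec {R : Type*} [CommSemiring R] {A : Matrix n n R}
    (hA : A.IsSymm) (N : Matrix n n R) (u v : n → R) :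
    u ⬝ᵥ (A * N * A) *ᵥ v = (A *ᵥ u) ⬝ᵥ N *ᵥ (A *ᵥ v) := by
  have hvecMul : u ᵥ* A = A *ᵥ u := by rw [← vecMul_transpose, hA.eq]
  rw [← mulVec_mulVec, ← mulVec_mulVec, dotProduct_mulVec, hvecMul]

theorem dotProduct_mulVec_le_of_posSemidef_sub {A B : Matrix n n ℝ} (h : (B - A).PosSemidef)
    (x : n → ℝ) : x ⬝ᵥ A *ᵥ x ≤ x ⬝ᵥ B *ᵥ x := by
  have := h.dotProduct_mulVec_nonneg x
  rw [star_trivial, sub_mulVec, dotProduct_sub] at this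
  linarith

variable [DecidableEq n]

theorem sq_dotProduct_mul_mul_mulVec_le {A B P : Matrix n n ℝ} {K : ℝ} (hA : A.IsSymm)
    (hAPA : A * P * A = 1)
    (h : ∀ a b : n → ℝ, (a ⬝ᵥ B *ᵥ b) ^ 2 ≤ K * (a ⬝ᵥ P *ᵥ a) * (b ⬝ᵥ P *ᵥ b))
    (u v : n → ℝ) : (u ⬝ᵥ (A * B * A) *ᵥ v) ^ 2 ≤ K * (u ⬝ᵥ u) * (v ⬝ᵥ v) := by
  have hP : ∀ w, (A *ᵥ w) ⬝ᵥ P *ᵥ (A *ᵥ w) = w ⬝ᵥ w := fun w => by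
    rw [← dotProduct_mul_mul_mulVec hA, hAPA, one_mulVec]
  rw [dotProduct_mul_mul_mulVec hA, ← hP u, ← hP v]
  exact h _ _

theorem l2_opNorm_one_le {𝕜 : Type*} [RCLike 𝕜] : ‖(1 : Matrix n n 𝕜)‖ ≤ 1 := by
  rw [← l2_opNorm_toEuclideanCLM, map_one]
  exact ContinuousLinearMap.norm_id_le

omit [DecidableEq n] in
theorem _root_.EuclideanSpace.real_norm_sq_eq_dotProduct (x : EuclideanSpace ℝ n) :
    ‖x‖ ^ 2 = x.ofLp ⬝ᵥ x.ofLp := by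
  rw [← real_inner_self_eq_norm_sq]
  rfl

theorem l2_opNorm_le_sqrt_of_sq_dotProduct_mulVec_le {M : Matrix n n ℝ} {K : ℝ}
    (h : ∀ u v : n → ℝ, (u ⬝ᵥ M *ᵥ v) ^ 2 ≤ K * (u ⬝ᵥ u) * (v ⬝ᵥ v)) : ‖M‖ ≤ √K := by
  rw [← l2_opNorm_toEuclideanCLM]
  refine ContinuousLinearMap.opNorm_le_bound _ (Real.sqrt_nonneg K) fun v => ?_
  set w := toEuclideanCLM (n := n) (𝕜 := ℝ) M v
  have hw : w.ofLp = M *ᵥ v.ofLp := rfl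
  have hv : 0 ≤ ‖v‖ ^ 2 := by positivity
  have hwv : (‖w‖ ^ 2) ^ 2 ≤ K * ‖w‖ ^ 2 * ‖v‖ ^ 2 := by
    simpa only [EuclideanSpace.real_norm_sq_eq_dotProduct, hw] using h (M *ᵥ v.ofLp) v.ofLp
  have hKv : 0 ≤ K * ‖v‖ ^ 2 := by
    have := (sq_nonneg _).trans (h v.ofLp v.ofLp)
    rw [← EuclideanSpace.real_norm_sq_eq_dotProduct] at this
    rcases hv.eq_or_lt with hv0 | hv0
    · rw [← hv0, mul_zero]
    · exact nonneg_of_mul_nonneg_left this hv0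
  have hsq : ‖w‖ ^ 2 ≤ K * ‖v‖ ^ 2 := by
    rcases (sq_nonneg ‖w‖).eq_or_lt with hw0 | hw0
    · rw [← hw0]; exact hKv
    · nlinarith
  calc ‖w‖ ≤ √(K * ‖v‖ ^ 2) := Real.le_sqrt_of_sq_le hsq
    _ = √K * ‖v‖ := by rw [Real.sqrt_mul' K hv, Real.sqrt_sq (norm_nonneg v)]

noncomputable def dotProductMulVecCLM (a b : n → ℝ) : Matrix n n ℝ →L[ℝ] ℝ :=
  LinearMap.toContinuousLinearMap
    (LinearMap.applyₗ b ∘ₗ LinearMap.applyₗ a ∘ₗ (toLinearMap₂' ℝ).toLinearMap)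

theorem dotProductMulVecCLM_apply (a b : n → ℝ) (N : Matrix n n ℝ) :
    dotProductMulVecCLM a b N = a ⬝ᵥ N *ᵥ b := by
  simp [dotProductMulVecCLM, toLinearMap₂'_apply']

theorem dotProductMulVecCLM_vecMulVec (a b p q : n → ℝ) :
    dotProductMulVecCLM a b (vecMulVec p q) = (a ⬝ᵥ p) * (b ⬝ᵥ q) := by
  simp [dotProductMulVecCLM_apply, vecMulVec_mulVec, dotProduct_comm q b, mul_comm]

end Matrix

theorem norm_inverse_one_sub_le {R : Type*} [NormedRing R] [HasSummableGeomSeries R]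
    (h1 : ‖(1 : R)‖ ≤ 1) {t : R} (ht : ‖t‖ < 1) : ‖Ring.inverse (1 - t)‖ ≤ (1 - ‖t‖)⁻¹ := by
  rw [← geom_series_eq_inverse t ht]
  linarith [tsum_geometric_le_of_norm_lt_one t ht]

section SecondMoment

variable {Ω : Type*} [MeasurableSpace Ω] {μ : Measure Ω}

theorem sq_integral_mul_le {f g : Ω → ℝ} (hff : Integrable (fun ω => f ω * f ω) μ)
    (hgg : Integrable (fun ω => g ω * g ω) μ) (hfg : Integrable (fun ω => f ω * g ω) μ) :
    (∫ ω, f ω * g ω ∂μ) ^ 2 ≤ (∫ ω, f ω * f ω ∂μ) * ∫ ω, g ω * g ω ∂μ := by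
  have hquad : ∀ t : ℝ, 0 ≤ (∫ ω, f ω * f ω ∂μ) * (t * t) + (2 * ∫ ω, f ω * g ω ∂μ) * t
      + ∫ ω, g ω * g ω ∂μ := fun t => by
    have hexp : (fun ω => (t * f ω + g ω) ^ 2)
        = fun ω => (t * t) * (f ω * f ω) + (2 * t) * (f ω * g ω) + g ω * g ω := by
      ext ω; ring
    have : 0 ≤ ∫ ω, (t * f ω + g ω) ^ 2 ∂μ := integral_nonneg fun ω => sq_nonneg _
    have hsum : Integrable (fun ω => (t * t) * (f ω * f ω) + (2 * t) * (f ω * g ω)) μ :=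
      (hff.const_mul _).add (hfg.const_mul _)
    rw [hexp, integral_add hsum hgg, integral_add (hff.const_mul _) (hfg.const_mul _),
      integral_const_mul, integral_const_mul] at this
    linarith
  have := discrim_le_zero hquad
  rw [discrim] at this
  linarith

variable {n : Type*} [Fintype n] [DecidableEq n] {x y : Ω → n → ℝ}

theorem MeasureTheory.Integrable.dotProduct_mul_dotProduct
    (h : Integrable (fun ω => vecMulVec (x ω) (y ω)) μ) (a b : n → ℝ) :
    Integrable (fun ω => (a ⬝ᵥ x ω) * (b ⬝ᵥ y ω)) μ := by
  simpa only [dotProductMulVecCLM_vecMulVec] using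
    (dotProductMulVecCLM a b).integrable_comp h

theorem dotProduct_integral_vecMulVec_mulVec (h : Integrable (fun ω => vecMulVec (x ω) (y ω)) μ)
    (a b : n → ℝ) :
    a ⬝ᵥ (∫ ω, vecMulVec (x ω) (y ω) ∂μ) *ᵥ b = ∫ ω, (a ⬝ᵥ x ω) * (b ⬝ᵥ y ω) ∂μ := by
  rw [← dotProductMulVecCLM_apply, ← ContinuousLinearMap.integral_comp_comm _ h]
  simp only [dotProductMulVecCLM_vecMulVec]

theorem sq_dotProduct_integral_vecMulVec_mulVec_le
    (hxx : Integrable (fun ω => vecMulVec (x ω) (x ω)) μ)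
    (hxy : Integrable (fun ω => vecMulVec (x ω) (y ω)) μ)
    (hyy : Integrable (fun ω => vecMulVec (y ω) (y ω)) μ) (a b : n → ℝ) :
    (a ⬝ᵥ (∫ ω, vecMulVec (x ω) (y ω) ∂μ) *ᵥ b) ^ 2 ≤
      (a ⬝ᵥ (∫ ω, vecMulVec (x ω) (x ω) ∂μ) *ᵥ a) *
        (b ⬝ᵥ (∫ ω, vecMulVec (y ω) (y ω) ∂μ) *ᵥ b) := by
  simp only [dotProduct_integral_vecMulVec_mulVec hxx, dotProduct_integral_vecMulVec_mulVec hxy,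
    dotProduct_integral_vecMulVec_mulVec hyy]
  exact sq_integral_mul_le (hxx.dotProduct_mul_dotProduct a a)
    (hyy.dotProduct_mul_dotProduct b b) (hxy.dotProduct_mul_dotProduct a b)

theorem sq_dotProduct_integral_vecMulVec_mulVec_le_of_posSemidef_sub {C : ℝ}
    (hxx : Integrable (fun ω => vecMulVec (x ω) (x ω)) μ)
    (hxy : Integrable (fun ω => vecMulVec (x ω) (y ω)) μ)
    (hyy : Integrable (fun ω => vecMulVec (y ω) (y ω)) μ)
    (hshift : (C • ∫ ω, vecMulVec (x ω) (x ω) ∂μ - ∫ ω, vecMulVec (y ω) (y ω) ∂μ).PosSemidef)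
    (a b : n → ℝ) :
    (a ⬝ᵥ (∫ ω, vecMulVec (x ω) (y ω) ∂μ) *ᵥ b) ^ 2 ≤
      C * (a ⬝ᵥ (∫ ω, vecMulVec (x ω) (x ω) ∂μ) *ᵥ a) *
        (b ⬝ᵥ (∫ ω, vecMulVec (x ω) (x ω) ∂μ) *ᵥ b) := by
  have hshift_b := dotProduct_mulVec_le_of_posSemidef_sub hshift b
  rw [smul_mulVec, dotProduct_smul, smul_eq_mul] at hshift_b
  have hxx_a : 0 ≤ a ⬝ᵥ (∫ ω, vecMulVec (x ω) (x ω) ∂μ) *ᵥ a := by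
    rw [dotProduct_integral_vecMulVec_mulVec hxx]
    exact integral_nonneg fun ω => mul_self_nonneg _
  calc _ ≤ _ := sq_dotProduct_integral_vecMulVec_mulVec_le hxx hxy hyy a b
    _ ≤ _ := mul_le_mul_of_nonneg_left hshift_b hxx_a
    _ = _ := by ring

end SecondMoment

theorem stmt_4_general {Ω : Type*} [MeasurableSpace Ω] (Pr : Measure Ω)
    (d : ℕ) (x y : Ω → Fin d → ℝ)
    (hxx : Integrable (fun ω => vecMulVec (x ω) (x ω)) Pr)
    (hxy : Integrable (fun ω => vecMulVec (x ω) (y ω)) Pr)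
    (hyy : Integrable (fun ω => vecMulVec (y ω) (y ω)) Pr)
    (Scov Scr Snext : Matrix (Fin d) (Fin d) ℝ)
    (hScov : Scov = ∫ ω, vecMulVec (x ω) (x ω) ∂Pr)
    (hScr : Scr = ∫ ω, vecMulVec (x ω) (y ω) ∂Pr)
    (hSnext : Snext = ∫ ω, vecMulVec (y ω) (y ω) ∂Pr)
    (hcov : Scov.PosDef)
    (C : ℝ) (hshift : (C • Scov - Snext).PosSemidef)
    (γ : ℝ) (hγ0 : 0 < γ) (hstab : γ * Real.sqrt C < 1) :
    IsUnit (1 - γ • (hcov.posSemidef.sqrt⁻¹ * Scr * hcov.posSemidef.sqrt⁻¹)).det ∧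
      ‖(1 - γ • (hcov.posSemidef.sqrt⁻¹ * Scr * hcov.posSemidef.sqrt⁻¹))⁻¹‖ ≤
        1 / (1 - γ * Real.sqrt C) := by
  have hcross := sq_dotProduct_integral_vecMulVec_mulVec_le_of_posSemidef_sub hxx hxy hyy
    (hScov ▸ hSnext ▸ hshift)
  rw [← hScov, ← hScr] at hcross
  set W := hcov.posSemidef.sqrt⁻¹
  have hW : W.IsSymm := (isHermitian_iff_isSymm.mp hcov.posSemidef.isHermitian_sqrt).inv
  have hnorm : ‖γ • (W * Scr * W)‖ ≤ γ * √C := by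
    rw [norm_smul, Real.norm_of_nonneg hγ0.le]
    exact mul_le_mul_of_nonneg_left (l2_opNorm_le_sqrt_of_sq_dotProduct_mulVec_le
      (sq_dotProduct_mul_mul_mulVec_le hW hcov.inv_sqrt_mul_self_mul_inv_sqrt hcross)) hγ0.le
  have hlt := hnorm.trans_lt hstab
  refine ⟨(isUnit_iff_isUnit_det _).mp (isUnit_one_sub_of_norm_lt_one hlt), ?_⟩
  rw [nonsing_inv_eq_ringInverse, one_div]
  exact (norm_inverse_one_sub_le l2_opNorm_one_le hlt).trans
    (inv_anti₀ (by linarith) (by linarith))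

/-- Corollary 4.4, low distribution shift part: if `Snext ⪯ C·Scov` and
`γ·√C < 1` then `I − γ·Scov^{-1/2}·Scr·Scov^{-1/2}` is invertible with inverse
of operator norm at most `1/(1 − γ√C)`. -/
theorem stmt_4 {Ω : Type*} [MeasurableSpace Ω] (Pr : Measure Ω) [IsProbabilityMeasure Pr]
    (d : ℕ) (x y : Ω → Fin d → ℝ) (hx : Measurable x) (hy : Measurable y)
    (hxx : Integrable (fun ω => vecMulVec (x ω) (x ω)) Pr)
    (hxy : Integrable (fun ω => vecMulVec (x ω) (y ω)) Pr)
    (hyy : Integrable (fun ω => vecMulVec (y ω) (y ω)) Pr)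
    (Scov Scr Snext : Matrix (Fin d) (Fin d) ℝ)
    (hScov : Scov = ∫ ω, vecMulVec (x ω) (x ω) ∂Pr)
    (hScr : Scr = ∫ ω, vecMulVec (x ω) (y ω) ∂Pr)
    (hSnext : Snext = ∫ ω, vecMulVec (y ω) (y ω) ∂Pr)
    (hcov : Scov.PosDef)
    (C : ℝ) (hC : 0 ≤ C) (hshift : (C • Scov - Snext).PosSemidef)
    (γ : ℝ) (hγ0 : 0 < γ) (hγ1 : γ < 1) (hstab : γ * Real.sqrt C < 1) :
    IsUnit (1 - γ • (hcov.posSemidef.sqrt⁻¹ * Scr * hcov.posSemidef.sqrt⁻¹)).det ∧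
      ‖(1 - γ • (hcov.posSemidef.sqrt⁻¹ * Scr * hcov.posSemidef.sqrt⁻¹))⁻¹‖ ≤
        1 / (1 - γ * Real.sqrt C) :=
  stmt_4_general Pr d x y hxx hxy hyy Scov Scr Snext hScov hScr hSnext hcov C hshift γ hγ0 hstab
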